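/- arXiv:2503.01067 — 5 statements merged into one kernel-verified Lean document; each statement's English description precedes it below -/
import Mathlib

section
/- Let Ξ be a nonempty finite type, r : Ξ → ℝ a reward, and P, P_ref positive trajectory distributions on Ξ. Then KL(P‖P_r* · P_ref) = log(Σ_ξ exp(r ξ) · P_ref ξ) − Σ_ξ P ξ · r ξ + KL(P‖P_ref); in particular, KL(P‖P_r* · P_ref) differs from −(Σ_ξ P ξ · r ξ − KL(P‖P_ref)) by a constant not depending on P. -/
open Finset

/-- A positive trajectory distribution on a finite type: pointwise positive and sums to 1. -/
def IsPosDist {Ξ : Type*} [Fintype Ξ] (P : Ξ → ℝ) : Prop :=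
  (∀ ξ, 0 < P ξ) ∧ ∑ ξ, P ξ = 1

/-- Soft-optimal distribution for a reward `r`: `P_r*(ξ) = exp (r ξ) / ∑ ξ', exp (r ξ')`. -/
noncomputable def softOpt {Ξ : Type*} [Fintype Ξ] (r : Ξ → ℝ) : Ξ → ℝ :=
  fun ξ => Real.exp (r ξ) / ∑ ξ' : Ξ, Real.exp (r ξ')

/-- KL divergence between two distributions on a finite type. -/
noncomputable def KL {Ξ : Type*} [Fintype Ξ] (P Q : Ξ → ℝ) : ℝ :=
  ∑ ξ, P ξ * Real.log (P ξ / Q ξ)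

/-- Entropy of a distribution on a finite type. -/
noncomputable def entropy {Ξ : Type*} [Fintype Ξ] (P : Ξ → ℝ) : ℝ :=
  -∑ ξ, P ξ * Real.log (P ξ)

/-- Normalized product of two distributions: `(P·Q)(ξ) = P ξ * Q ξ / ∑ ξ', P ξ' * Q ξ'`. -/
noncomputable def prodDist {Ξ : Type*} [Fintype Ξ] (P Q : Ξ → ℝ) : Ξ → ℝ :=
  fun ξ => P ξ * Q ξ / ∑ ξ' : Ξ, P ξ' * Q ξ'

/-- The sigmoid function `σ(x) = 1 / (1 + exp (−x))`. -/
noncomputable def sigmoid (x : ℝ) : ℝ := 1 / (1 + Real.exp (-x))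

/-- Bradley–Terry log-likelihood of a reward `r` on a dataset `D` of preference pairs. -/
noncomputable def BTll {Ξ : Type*} (D : List (Ξ × Ξ)) (r : Ξ → ℝ) : ℝ :=
  (D.map (fun p => Real.log (sigmoid (r p.1 - r p.2)))).sum

/-- Set of maximizers of `f` over the set `S`. -/
def argmaxOn {α : Type*} (f : α → ℝ) (S : Set α) : Set α :=
  {x | x ∈ S ∧ ∀ y ∈ S, f y ≤ f x}

/-- Set of minimizers of `f` over the set `S`. -/
def argminOn {α : Type*} (f : α → ℝ) (S : Set α) : Set α :=
  {x | x ∈ S ∧ ∀ y ∈ S, f x ≤ f y}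

/-- DPO log-likelihood of distribution `P` relative to reference `Pref` on dataset `D`. -/
noncomputable def DPOll {Ξ : Type*} (D : List (Ξ × Ξ)) (Pref P : Ξ → ℝ) : ℝ :=
  (D.map (fun p =>
    Real.log (sigmoid (Real.log (P p.1 / Pref p.1) - Real.log (P p.2 / Pref p.2))))).sum

/-- MLE log-likelihood of distribution `P` on dataset `D`. -/
noncomputable def MLEll {Ξ : Type*} (D : List (Ξ × Ξ)) (P : Ξ → ℝ) : ℝ :=
  (D.map (fun p => Real.log (sigmoid (Real.log (P p.1) - Real.log (P p.2))))).sum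

lemma kl_tilted_key {Ξ : Type*} [Fintype Ξ] [Nonempty Ξ]
    (r : Ξ → ℝ) (P Pref : Ξ → ℝ) (hP : IsPosDist P) (hPref : IsPosDist Pref) :
    KL P (prodDist (softOpt r) Pref) =
      Real.log (∑ ξ : Ξ, Real.exp (r ξ) * Pref ξ) - (∑ ξ, P ξ * r ξ) + KL P Pref := by
  obtain ⟨hPpos, hPsum⟩ := hP
  obtain ⟨hRpos, hRsum⟩ := hPref
  have hS : 0 < ∑ ξ : Ξ, Real.exp (r ξ) :=
    Finset.sum_pos (fun ξ _ => Real.exp_pos _) Finset.univ_nonempty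
  have hZ : 0 < ∑ ξ : Ξ, Real.exp (r ξ) * Pref ξ :=
    Finset.sum_pos (fun ξ _ => mul_pos (Real.exp_pos _) (hRpos ξ)) Finset.univ_nonempty
  set Z := ∑ ξ : Ξ, Real.exp (r ξ) * Pref ξ with hZdef
  have hD : ∀ ξ, prodDist (softOpt r) Pref ξ = Real.exp (r ξ) * Pref ξ / Z := by
    intro ξ
    simp only [prodDist, softOpt]
    rw [show (∑ ξ' : Ξ, Real.exp (r ξ') / (∑ ξ'' : Ξ, Real.exp (r ξ'')) * Pref ξ')
        = Z / (∑ ξ'' : Ξ, Real.exp (r ξ'')) by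
      rw [Finset.sum_div]; exact Finset.sum_congr rfl (fun ξ' _ => by ring)]
    field_simp
  have hterm : ∀ ξ, P ξ * Real.log (P ξ / prodDist (softOpt r) Pref ξ)
      = P ξ * Real.log Z - P ξ * r ξ + P ξ * Real.log (P ξ / Pref ξ) := by
    intro ξ
    have h1 := ne_of_gt (hPpos ξ)
    have h2 := ne_of_gt (hRpos ξ)
    have h3 : Real.exp (r ξ) ≠ 0 := (Real.exp_pos _).ne'
    rw [hD ξ, div_div_eq_mul_div, Real.log_div (mul_ne_zero h1 (ne_of_gt hZ)) (mul_ne_zero h3 h2),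
        Real.log_mul h1 (ne_of_gt hZ),
        Real.log_mul h3 h2, Real.log_exp,
        Real.log_div h1 h2]
    ring
  unfold KL
  rw [Finset.sum_congr rfl (fun ξ _ => hterm ξ)]
  rw [Finset.sum_add_distrib, Finset.sum_sub_distrib, ← Finset.sum_mul, hPsum]
  ring

/-- The reverse KL to the tilted reference softOpt r · P_ref equals
log (∑ ξ, exp (r ξ) * P_ref ξ) − ∑ ξ, P ξ * r ξ + KL(P‖P_ref); in particular it differs
from the negated KL-regularized expected reward by a constant not depending on P. -/
theorem kl_to_tilted_reference_eq {Ξ : Type*} [Fintype Ξ] [Nonempty Ξ]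
    (r : Ξ → ℝ) (P Pref : Ξ → ℝ) (hP : IsPosDist P) (hPref : IsPosDist Pref) :
    KL P (prodDist (softOpt r) Pref) =
      Real.log (∑ ξ : Ξ, Real.exp (r ξ) * Pref ξ) - (∑ ξ, P ξ * r ξ) + KL P Pref ∧
    ∃ c : ℝ, ∀ Q : Ξ → ℝ, IsPosDist Q →
      KL Q (prodDist (softOpt r) Pref) = -((∑ ξ, Q ξ * r ξ) - KL Q Pref) + c := by
  refine ⟨kl_tilted_key r P Pref hP hPref, Real.log (∑ ξ : Ξ, Real.exp (r ξ) * Pref ξ), ?_⟩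
  intro Q hQ
  rw [kl_tilted_key r Q Pref hQ hPref]
  ring
end

section
/- Let Ξ be a nonempty finite type, D a finite list of pairs of trajectories, Π a set of positive trajectory distributions on Ξ, and let R = { ξ ↦ log(P ξ) | P ∈ Π } be the corresponding class of local rewards. Define r̂_mle as the set of maximizers over R of the Bradley–Terry log-likelihood ℓ, π̂_mle as the set of maximizers over Π of P ↦ ℓ(log P), and π̂_rlhf as the union over r ∈ r̂_mle of the sets of maximizers over Π of P ↦ Σ_ξ P ξ · r ξ + H(P). Then π̂_rlhf = π̂_mle. (Theorem 1: RLHF is MLE when the reward class equals the local reward class.) -/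
open Finset

lemma gibbs_le {Ξ : Type*} [Fintype Ξ] {P Q : Ξ → ℝ}
    (hP : IsPosDist P) (hQ : IsPosDist Q) :
    ∑ ξ, P ξ * Real.log (Q ξ / P ξ) ≤ 0 := by
  have h : ∀ ξ ∈ Finset.univ, P ξ * Real.log (Q ξ / P ξ) ≤ Q ξ - P ξ := by
    intro ξ _
    have hx : 0 < Q ξ / P ξ := div_pos (hQ.1 ξ) (hP.1 ξ)
    have := Real.log_le_sub_one_of_pos hx
    calc P ξ * Real.log (Q ξ / P ξ) ≤ P ξ * (Q ξ / P ξ - 1) := by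
          exact mul_le_mul_of_nonneg_left this (hP.1 ξ).le
      _ = Q ξ - P ξ := by rw [mul_sub, mul_div_cancel₀ _ (hP.1 ξ).ne', mul_one]
  calc ∑ ξ, P ξ * Real.log (Q ξ / P ξ) ≤ ∑ ξ, (Q ξ - P ξ) := Finset.sum_le_sum h
    _ = 0 := by rw [Finset.sum_sub_distrib, hP.2, hQ.2]; ring

lemma gibbs_eq {Ξ : Type*} [Fintype Ξ] {P Q : Ξ → ℝ}
    (hP : IsPosDist P) (hQ : IsPosDist Q)
    (h : ∑ ξ, P ξ * Real.log (Q ξ / P ξ) = 0) : P = Q := by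
  by_contra hne
  obtain ⟨ξ0, hξ0⟩ : ∃ ξ, P ξ ≠ Q ξ := by
    by_contra hc; push_neg at hc; exact hne (funext hc)
  have hstrict : ∑ ξ, P ξ * Real.log (Q ξ / P ξ) < ∑ ξ, (Q ξ - P ξ) := by
    apply Finset.sum_lt_sum
    · intro ξ _
      have hx : 0 < Q ξ / P ξ := div_pos (hQ.1 ξ) (hP.1 ξ)
      calc P ξ * Real.log (Q ξ / P ξ) ≤ P ξ * (Q ξ / P ξ - 1) :=
            mul_le_mul_of_nonneg_left (Real.log_le_sub_one_of_pos hx) (hP.1 ξ).le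
        _ = Q ξ - P ξ := by rw [mul_sub, mul_div_cancel₀ _ (hP.1 ξ).ne', mul_one]
    · refine ⟨ξ0, Finset.mem_univ _, ?_⟩
      have hx : 0 < Q ξ0 / P ξ0 := div_pos (hQ.1 ξ0) (hP.1 ξ0)
      have hne1 : Q ξ0 / P ξ0 ≠ 1 := by
        intro h1
        exact hξ0 ((div_eq_one_iff_eq (hP.1 ξ0).ne').mp h1).symm
      have := Real.log_lt_sub_one_of_pos hx hne1
      calc P ξ0 * Real.log (Q ξ0 / P ξ0) < P ξ0 * (Q ξ0 / P ξ0 - 1) :=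
            (mul_lt_mul_iff_right₀ (hP.1 ξ0)).mpr this
        _ = Q ξ0 - P ξ0 := by rw [mul_sub, mul_div_cancel₀ _ (hP.1 ξ0).ne', mul_one]
  rw [h] at hstrict
  rw [Finset.sum_sub_distrib, hP.2, hQ.2] at hstrict
  linarith

lemma obj_eq {Ξ : Type*} [Fintype Ξ] {P Q : Ξ → ℝ}
    (hP : IsPosDist P) (hQ : IsPosDist Q) :
    (∑ ξ, P ξ * Real.log (Q ξ)) + entropy P = ∑ ξ, P ξ * Real.log (Q ξ / P ξ) := by
  unfold entropy
  rw [← sub_eq_add_neg, ← Finset.sum_sub_distrib]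
  apply Finset.sum_congr rfl
  intro ξ _
  rw [Real.log_div (hQ.1 ξ).ne' (hP.1 ξ).ne']
  ring

lemma argmax_obj {Ξ : Type*} [Fintype Ξ] {Pi : Set (Ξ → ℝ)}
    (hPi : ∀ P ∈ Pi, IsPosDist P) {Q : Ξ → ℝ} (hQ : Q ∈ Pi) :
    argmaxOn (fun P => (∑ ξ, P ξ * Real.log (Q ξ)) + entropy P) Pi = {Q} := by
  have hQd := hPi Q hQ
  have key : ∀ P ∈ Pi, (∑ ξ, P ξ * Real.log (Q ξ)) + entropy P ≤ 0 := by
    intro P hP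
    rw [obj_eq (hPi P hP) hQd]
    exact gibbs_le (hPi P hP) hQd
  have hQ0 : (∑ ξ, Q ξ * Real.log (Q ξ)) + entropy Q = 0 := by
    unfold entropy; ring
  ext P
  constructor
  · rintro ⟨hPmem, hmax⟩
    have h1 : (0:ℝ) ≤ (∑ ξ, P ξ * Real.log (Q ξ)) + entropy P := by
      exact le_trans (le_of_eq hQ0.symm) (hmax Q hQ)
    have h2 := key P hPmem
    have h0 : (∑ ξ, P ξ * Real.log (Q ξ)) + entropy P = 0 := le_antisymm h2 h1
    rw [obj_eq (hPi P hPmem) hQd] at h0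
    exact gibbs_eq (hPi P hPmem) hQd h0
  · rintro rfl
    exact ⟨hQ, fun y hy => le_trans (key y hy) (le_of_eq hQ0.symm)⟩


/-- Theorem 1 (RLHF is MLE when the reward class equals the local reward class):
with R = { ξ ↦ log (P ξ) | P ∈ Π }, the union over Bradley–Terry MLE rewards r ∈ R of the
maximizers over Π of the entropy-regularized expected reward equals the set of maximizers
over Π of the Bradley–Terry log-likelihood of the local reward log P. -/
theorem rlhf_is_mle {Ξ : Type*} [Fintype Ξ] [Nonempty Ξ]
    (D : List (Ξ × Ξ)) (Pi : Set (Ξ → ℝ)) (hPi : ∀ P ∈ Pi, IsPosDist P) :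
    (⋃ r ∈ argmaxOn (BTll D) ((fun (P : Ξ → ℝ) (ξ : Ξ) => Real.log (P ξ)) '' Pi),
        argmaxOn (fun P => (∑ ξ, P ξ * r ξ) + entropy P) Pi) =
      argmaxOn (fun P => BTll D (fun ξ => Real.log (P ξ))) Pi := by
  ext P
  simp only [Set.mem_iUnion]
  constructor
  · rintro ⟨r, ⟨⟨Q, hQmem, rfl⟩, hrmax⟩, hP⟩
    rw [argmax_obj hPi hQmem] at hP
    rw [Set.mem_singleton_iff] at hP
    subst hP
    refine ⟨hQmem, fun y hy => ?_⟩
    exact hrmax _ ⟨y, hy, rfl⟩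
  · rintro ⟨hPmem, hmax⟩
    refine ⟨fun ξ => Real.log (P ξ), ⟨⟨P, hPmem, rfl⟩, ?_⟩, ?_⟩
    · rintro s ⟨y, hy, rfl⟩
      exact hmax y hy
    · rw [argmax_obj hPi hPmem]
      rfl
end

section
/- Let Ξ be a nonempty finite type, D a finite list of pairs of trajectories, P_ref a positive trajectory distribution on Ξ, and Q a positive trajectory distribution on Ξ. Then ℓ_dpo(Q · P_ref) = ℓ_mle(Q), i.e., the DPO log-likelihood of the normalized product Q · P_ref equals the MLE log-likelihood of Q. -/
open Finset

/-- The DPO log-likelihood of the normalized product Q · P_ref equals the MLE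
log-likelihood of Q. -/
theorem dpoll_prodDist_eq_mlell {Ξ : Type*} [Fintype Ξ] [Nonempty Ξ]
    (D : List (Ξ × Ξ)) (Pref Q : Ξ → ℝ) (hPref : IsPosDist Pref) (hQ : IsPosDist Q) :
    DPOll D Pref (prodDist Q Pref) = MLEll D Q := by
  have hZ : 0 < ∑ ξ' : Ξ, Q ξ' * Pref ξ' :=
    Finset.sum_pos (fun ξ _ => mul_pos (hQ.1 ξ) (hPref.1 ξ)) Finset.univ_nonempty
  have key : ∀ ξ, Real.log (prodDist Q Pref ξ / Pref ξ)
      = Real.log (Q ξ) - Real.log (∑ ξ' : Ξ, Q ξ' * Pref ξ') := by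
    intro ξ
    have h1 : prodDist Q Pref ξ / Pref ξ = Q ξ / (∑ ξ' : Ξ, Q ξ' * Pref ξ') := by
      unfold prodDist
      rw [mul_comm (Q ξ), div_div, mul_comm (∑ ξ' : Ξ, Q ξ' * Pref ξ') (Pref ξ),
        mul_div_mul_left _ _ (ne_of_gt (hPref.1 ξ))]
    rw [h1, Real.log_div (ne_of_gt (hQ.1 ξ)) (ne_of_gt hZ)]
  unfold DPOll MLEll
  congr 1
  apply List.map_congr_left
  intro p _
  rw [key p.1, key p.2]
  ring_nf
end

section
/- Let Ξ be a nonempty finite type, D a finite list of pairs of trajectories, and P_ref a positive trajectory distribution on Ξ. A positive trajectory distribution Q maximizes ℓ_mle over the set of all positive trajectory distributions on Ξ if and only if the normalized product Q · P_ref maximizes ℓ_dpo over the set of all positive trajectory distributions on Ξ. Consequently, the unconstrained maximizer set of ℓ_dpo equals { Q · P_ref | Q an unconstrained maximizer of ℓ_mle }. -/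
open Finset

private lemma mySumPos {Ξ : Type*} [Fintype Ξ] [Nonempty Ξ] {f : Ξ → ℝ}
    (h : ∀ ξ, 0 < f ξ) : 0 < ∑ ξ, f ξ :=
  Finset.sum_pos (fun ξ _ => h ξ) Finset.univ_nonempty

private lemma prodDist_isPosDist {Ξ : Type*} [Fintype Ξ] [Nonempty Ξ] {P Q : Ξ → ℝ}
    (hP : ∀ ξ, 0 < P ξ) (hQ : ∀ ξ, 0 < Q ξ) : IsPosDist (prodDist P Q) := by
  have hZ : 0 < ∑ ξ' : Ξ, P ξ' * Q ξ' := mySumPos (fun ξ => mul_pos (hP ξ) (hQ ξ))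
  refine ⟨fun ξ => div_pos (mul_pos (hP ξ) (hQ ξ)) hZ, ?_⟩
  simp [prodDist, ← Finset.sum_div, div_self hZ.ne']

private lemma dpo_prod_eq_mle {Ξ : Type*} [Fintype Ξ] [Nonempty Ξ] (D : List (Ξ × Ξ))
    {Pref Q : Ξ → ℝ} (hPref : ∀ ξ, 0 < Pref ξ) (hQ : ∀ ξ, 0 < Q ξ) :
    DPOll D Pref (prodDist Q Pref) = MLEll D Q := by
  have hZ : 0 < ∑ ξ' : Ξ, Q ξ' * Pref ξ' := mySumPos (fun ξ => mul_pos (hQ ξ) (hPref ξ))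
  have key : ∀ ξ, Real.log (prodDist Q Pref ξ / Pref ξ)
      = Real.log (Q ξ) - Real.log (∑ ξ' : Ξ, Q ξ' * Pref ξ') := by
    intro ξ
    have h1 : prodDist Q Pref ξ / Pref ξ = Q ξ / (∑ ξ' : Ξ, Q ξ' * Pref ξ') := by
      show Q ξ * Pref ξ / _ / Pref ξ = _
      rw [div_div, mul_comm (∑ ξ' : Ξ, Q ξ' * Pref ξ') (Pref ξ), ← div_div,
        mul_div_assoc, div_self (hPref ξ).ne', mul_one]
    rw [h1, Real.log_div (hQ ξ).ne' hZ.ne']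
  unfold DPOll MLEll
  congr 1
  apply List.map_congr_left
  intro p _
  rw [key, key]
  ring_nf

private lemma prod_inv_cancel {Ξ : Type*} [Fintype Ξ] [Nonempty Ξ] {Pref P : Ξ → ℝ}
    (hPref : ∀ ξ, 0 < Pref ξ) (hP : IsPosDist P) :
    prodDist (prodDist P (fun ξ => (Pref ξ)⁻¹)) Pref = P := by
  have hZ1 : 0 < ∑ ξ' : Ξ, P ξ' * (Pref ξ')⁻¹ :=
    mySumPos fun ξ => mul_pos (hP.1 ξ) (inv_pos.2 (hPref ξ))
  have hstep : ∀ ξ, prodDist P (fun x => (Pref x)⁻¹) ξ * Pref ξ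
      = P ξ / (∑ ξ' : Ξ, P ξ' * (Pref ξ')⁻¹) := by
    intro ξ
    unfold prodDist
    field_simp
    rw [mul_comm (P ξ), mul_div_mul_left _ _ (hPref ξ).ne']
  have hden : (∑ ξ' : Ξ, prodDist P (fun x => (Pref x)⁻¹) ξ' * Pref ξ')
      = (∑ ξ' : Ξ, P ξ' * (Pref ξ')⁻¹)⁻¹ := by
    rw [Finset.sum_congr rfl (fun ξ _ => hstep ξ), ← Finset.sum_div, hP.2, one_div]
  funext ξ
  show prodDist P (fun x => (Pref x)⁻¹) ξ * Pref ξ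
      / (∑ ξ' : Ξ, prodDist P (fun x => (Pref x)⁻¹) ξ' * Pref ξ') = P ξ
  rw [hden, hstep, div_eq_mul_inv _ (_)⁻¹, inv_inv, div_mul_cancel₀ _ hZ1.ne']

/-- A positive trajectory distribution Q maximizes the MLE log-likelihood over all positive
trajectory distributions iff Q · P_ref maximizes the DPO log-likelihood over all positive
trajectory distributions; consequently, the unconstrained maximizer set of the DPO
log-likelihood is the image under (· · P_ref) of that of the MLE log-likelihood. -/
theorem mle_max_iff_dpo_max {Ξ : Type*} [Fintype Ξ] [Nonempty Ξ]
    (D : List (Ξ × Ξ)) (Pref : Ξ → ℝ) (hPref : IsPosDist Pref) :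
    (∀ Q : Ξ → ℝ, IsPosDist Q →
      (Q ∈ argmaxOn (MLEll D) {P | IsPosDist P} ↔
        prodDist Q Pref ∈ argmaxOn (DPOll D Pref) {P | IsPosDist P})) ∧
    argmaxOn (DPOll D Pref) {P | IsPosDist P} =
      (fun Q => prodDist Q Pref) '' argmaxOn (MLEll D) {P | IsPosDist P} := by
  have hPr := hPref.1
  have key : ∀ Q : Ξ → ℝ, IsPosDist Q →
      (Q ∈ argmaxOn (MLEll D) {P | IsPosDist P} ↔
        prodDist Q Pref ∈ argmaxOn (DPOll D Pref) {P | IsPosDist P}) := by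
    intro Q hQ
    constructor
    · rintro ⟨-, hmax⟩
      refine ⟨prodDist_isPosDist hQ.1 hPr, ?_⟩
      intro P hP
      set Q' := prodDist P (fun ξ => (Pref ξ)⁻¹) with hQ'def
      have hQ' : IsPosDist Q' := prodDist_isPosDist hP.1 (fun ξ => inv_pos.2 (hPr ξ))
      have hPQ : prodDist Q' Pref = P := prod_inv_cancel hPr hP
      calc DPOll D Pref P = DPOll D Pref (prodDist Q' Pref) := by rw [hPQ]
        _ = MLEll D Q' := dpo_prod_eq_mle D hPr hQ'.1
        _ ≤ MLEll D Q := hmax Q' hQ'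
        _ = DPOll D Pref (prodDist Q Pref) := (dpo_prod_eq_mle D hPr hQ.1).symm
    · rintro ⟨-, hmax⟩
      refine ⟨hQ, ?_⟩
      intro P hP
      calc MLEll D P = DPOll D Pref (prodDist P Pref) := (dpo_prod_eq_mle D hPr hP.1).symm
        _ ≤ DPOll D Pref (prodDist Q Pref) := hmax _ (prodDist_isPosDist hP.1 hPr)
        _ = MLEll D Q := dpo_prod_eq_mle D hPr hQ.1
  refine ⟨key, ?_⟩
  ext P
  constructor
  · intro hPmax
    have hP : IsPosDist P := hPmax.1
    set Q' := prodDist P (fun ξ => (Pref ξ)⁻¹) with hQ'def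
    have hQ' : IsPosDist Q' := prodDist_isPosDist hP.1 (fun ξ => inv_pos.2 (hPr ξ))
    have hPQ : prodDist Q' Pref = P := prod_inv_cancel hPr hP
    exact ⟨Q', (key Q' hQ').2 (by rwa [hPQ]), hPQ⟩
  · rintro ⟨Q, hQmax, rfl⟩
    exact (key Q hQmax.1).1 hQmax
end

section
/- Let Ξ be a nonempty finite type, D a finite list of pairs of trajectories, Π a set of positive trajectory distributions on Ξ, and R_sim a set of rewards r : Ξ → ℝ such that P_r* ∈ Π for every r ∈ R_sim. Define Π(R_sim) as the set of P ∈ Π such that P minimizes Q ↦ KL(Q‖P_r*) over Π for some r ∈ R_sim; define r̂_sim as the set of maximizers over R_sim of the Bradley–Terry log-likelihood ℓ; define π̂_rlhf as the union over r ∈ r̂_sim of the sets of maximizers over Π of P ↦ Σ_ξ P ξ · r ξ + H(P); and define π̂_sim as the set of maximizers over Π(R_sim) of P ↦ ℓ(log P). Then π̂_rlhf = π̂_sim. (Theorem 3: RLHF is MLE over the soft-optimal policies of the simple reward class.) -/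
open Finset

section Aux

variable {Ξ : Type*} [Fintype Ξ] [Nonempty Ξ]

lemma sum_exp_pos (r : Ξ → ℝ) : 0 < ∑ ξ' : Ξ, Real.exp (r ξ') :=
  Finset.sum_pos (fun ξ _ => Real.exp_pos _) Finset.univ_nonempty

lemma softOpt_posDist (r : Ξ → ℝ) : IsPosDist (softOpt r) := by
  constructor
  · intro ξ; exact div_pos (Real.exp_pos _) (sum_exp_pos r)
  · simp [softOpt, ← Finset.sum_div, div_self (sum_exp_pos r).ne']

lemma log_softOpt (r : Ξ → ℝ) (ξ : Ξ) :
    Real.log (softOpt r ξ) = r ξ - Real.log (∑ ξ' : Ξ, Real.exp (r ξ')) := by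
  rw [softOpt, Real.log_div (Real.exp_pos _).ne' (sum_exp_pos r).ne', Real.log_exp]

lemma KL_self {P : Ξ → ℝ} (hP : IsPosDist P) : KL P P = 0 := by
  refine Finset.sum_eq_zero fun ξ _ => ?_
  rw [div_self (hP.1 ξ).ne', Real.log_one, mul_zero]

lemma KL_pos {P Q : Ξ → ℝ} (hP : IsPosDist P) (hQ : IsPosDist Q) (h : P ≠ Q) :
    0 < KL P Q := by
  obtain ⟨ξ0, hξ0⟩ := Function.ne_iff.mp h
  have key : ∀ ξ, P ξ ≠ Q ξ → P ξ - Q ξ < P ξ * Real.log (P ξ / Q ξ) := by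
    intro ξ hne
    have hp := hP.1 ξ
    have hq := hQ.1 ξ
    have hlt : Real.log (Q ξ / P ξ) < Q ξ / P ξ - 1 := by
      refine Real.log_lt_sub_one_of_pos (div_pos hq hp) ?_
      intro hone
      exact hne ((div_eq_one_iff_eq hp.ne').mp hone).symm
    have hlog : 1 - Q ξ / P ξ < Real.log (P ξ / Q ξ) := by
      have hinv : Real.log (P ξ / Q ξ) = -Real.log (Q ξ / P ξ) := by
        rw [← Real.log_inv, inv_div]
      rw [hinv]; linarith
    have := (mul_lt_mul_iff_right₀ hp).mpr hlog
    calc P ξ - Q ξ = P ξ * (1 - Q ξ / P ξ) := by field_simp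
      _ < P ξ * Real.log (P ξ / Q ξ) := this
  have keyle : ∀ ξ, P ξ - Q ξ ≤ P ξ * Real.log (P ξ / Q ξ) := by
    intro ξ
    by_cases hne : P ξ = Q ξ
    · rw [hne, div_self (hQ.1 ξ).ne', Real.log_one, mul_zero]; linarith
    · exact (key ξ hne).le
  have hsum : ∑ ξ, (P ξ - Q ξ) < ∑ ξ, P ξ * Real.log (P ξ / Q ξ) :=
    Finset.sum_lt_sum (fun ξ _ => keyle ξ) ⟨ξ0, Finset.mem_univ _, key ξ0 hξ0⟩
  have : ∑ ξ, (P ξ - Q ξ) = 0 := by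
    rw [Finset.sum_sub_distrib, hP.2, hQ.2, sub_self]
  unfold KL
  linarith

lemma gibbs_identity (r : Ξ → ℝ) {P : Ξ → ℝ} (hP : IsPosDist P) :
    (∑ ξ, P ξ * r ξ) + entropy P =
      Real.log (∑ ξ' : Ξ, Real.exp (r ξ')) - KL P (softOpt r) := by
  have hZ := sum_exp_pos r
  have : KL P (softOpt r) = ∑ ξ, (P ξ * Real.log (P ξ) - P ξ * r ξ
      + P ξ * Real.log (∑ ξ' : Ξ, Real.exp (r ξ'))) := by
    refine Finset.sum_congr rfl fun ξ _ => ?_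
    rw [Real.log_div (hP.1 ξ).ne' ((softOpt_posDist r).1 ξ).ne', log_softOpt]
    ring
  rw [this, entropy]
  rw [Finset.sum_add_distrib, Finset.sum_sub_distrib, ← Finset.sum_mul, hP.2, one_mul]
  ring

lemma BTll_log_softOpt (D : List (Ξ × Ξ)) (r : Ξ → ℝ) :
    BTll D (fun ξ => Real.log (softOpt r ξ)) = BTll D r := by
  unfold BTll
  congr 1
  refine List.map_congr_left fun p _ => ?_
  simp only [log_softOpt]
  ring_nf

lemma argmin_KL_iff {Pi : Set (Ξ → ℝ)} (hPi : ∀ P ∈ Pi, IsPosDist P)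
    {r : Ξ → ℝ} (hr : softOpt r ∈ Pi) (P : Ξ → ℝ) :
    P ∈ argminOn (fun Q => KL Q (softOpt r)) Pi ↔ P = softOpt r := by
  constructor
  · rintro ⟨hPmem, hmin⟩
    by_contra hne
    have h1 := hmin (softOpt r) hr
    have h2 := KL_pos (hPi P hPmem) (softOpt_posDist r) hne
    dsimp only at h1
    rw [KL_self (softOpt_posDist r)] at h1
    linarith
  · rintro rfl
    refine ⟨hr, fun Q hQ => ?_⟩
    dsimp only
    rw [KL_self (softOpt_posDist r)]
    by_cases hne : Q = softOpt r
    · rw [hne, KL_self (softOpt_posDist r)]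
    · exact (KL_pos (hPi Q hQ) (softOpt_posDist r) hne).le

lemma argmax_reg_iff {Pi : Set (Ξ → ℝ)} (hPi : ∀ P ∈ Pi, IsPosDist P)
    {r : Ξ → ℝ} (hr : softOpt r ∈ Pi) (P : Ξ → ℝ) :
    P ∈ argmaxOn (fun P => (∑ ξ, P ξ * r ξ) + entropy P) Pi ↔ P = softOpt r := by
  constructor
  · rintro ⟨hPmem, hmax⟩
    by_contra hne
    have h1 := hmax (softOpt r) hr
    dsimp only at h1
    rw [gibbs_identity r (hPi P hPmem), gibbs_identity r (softOpt_posDist r),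
      KL_self (softOpt_posDist r)] at h1
    have h2 := KL_pos (hPi P hPmem) (softOpt_posDist r) hne
    linarith
  · rintro rfl
    refine ⟨hr, fun Q hQ => ?_⟩
    dsimp only
    rw [gibbs_identity r (hPi Q hQ), gibbs_identity r (softOpt_posDist r),
      KL_self (softOpt_posDist r)]
    by_cases hne : Q = softOpt r
    · rw [hne, KL_self (softOpt_posDist r)]
    · have := KL_pos (hPi Q hQ) (softOpt_posDist r) hne
      linarith

end Aux

/-- Theorem 3 (RLHF is MLE over the soft-optimal policies of the simple reward class):
if the soft-optimal distribution of every r ∈ R_sim lies in Π, then the union over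
Bradley–Terry MLE rewards r ∈ R_sim of the maximizers over Π of the entropy-regularized
expected reward equals the set of maximizers of the Bradley–Terry log-likelihood of the
local reward log P over Π(R_sim), the set of P ∈ Π that minimize the reverse KL to
softOpt r over Π for some r ∈ R_sim. -/
theorem rlhf_is_mle_over_simple_policies {Ξ : Type*} [Fintype Ξ] [Nonempty Ξ]
    (D : List (Ξ × Ξ)) (Pi : Set (Ξ → ℝ)) (hPi : ∀ P ∈ Pi, IsPosDist P)
    (Rsim : Set (Ξ → ℝ)) (hRsim : ∀ r ∈ Rsim, softOpt r ∈ Pi) :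
    (⋃ r ∈ argmaxOn (BTll D) Rsim,
        argmaxOn (fun P => (∑ ξ, P ξ * r ξ) + entropy P) Pi) =
      argmaxOn (fun P => BTll D (fun ξ => Real.log (P ξ)))
        {P | P ∈ Pi ∧ ∃ r ∈ Rsim, P ∈ argminOn (fun Q => KL Q (softOpt r)) Pi} := by
  ext P
  simp only [Set.mem_iUnion, Set.mem_setOf_eq]
  constructor
  · rintro ⟨r, ⟨hrRsim, hrmax⟩, hP⟩
    have hPeq : P = softOpt r := (argmax_reg_iff hPi (hRsim r hrRsim) P).mp hP
    refine ⟨⟨hPeq ▸ hRsim r hrRsim,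
      ⟨r, hrRsim, (argmin_KL_iff hPi (hRsim r hrRsim) P).mpr hPeq⟩⟩, ?_⟩
    rintro Q ⟨hQPi, r', hr'Rsim, hQmin⟩
    have hQeq : Q = softOpt r' := (argmin_KL_iff hPi (hRsim r' hr'Rsim) Q).mp hQmin
    dsimp only
    rw [hQeq, hPeq, BTll_log_softOpt, BTll_log_softOpt]
    exact hrmax r' hr'Rsim
  · rintro ⟨⟨hPPi, r, hrRsim, hPmin⟩, hmax⟩
    have hPeq : P = softOpt r := (argmin_KL_iff hPi (hRsim r hrRsim) P).mp hPmin
    refine ⟨r, ⟨hrRsim, fun r' hr' => ?_⟩,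
      (argmax_reg_iff hPi (hRsim r hrRsim) P).mpr hPeq⟩
    have hmem : softOpt r' ∈ {P | P ∈ Pi ∧ ∃ r ∈ Rsim,
        P ∈ argminOn (fun Q => KL Q (softOpt r)) Pi} :=
      ⟨hRsim r' hr', r', hr', (argmin_KL_iff hPi (hRsim r' hr') _).mpr rfl⟩
    have := hmax _ hmem
    dsimp only at this
    rw [hPeq, BTll_log_softOpt, BTll_log_softOpt] at this
    exact this
end
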